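/- arXiv:2311.05901 — 3 statements merged into one kernel-verified Lean document; each statement's English description precedes it below -/
import Mathlib

section
/- Let f be a proper colouring of the n-dimensional associahedron with m colours. Then for every segment X of [n]₀ of cardinality κ, the number of segments Y of [n]₀ with f(Y) = f(X) (including X itself) is at most min{κ+1, n−κ+2}. -/
/-!
Any two segments `Y, Z` of one colour are separated, so ordering a colour class by left
endpoints also orders it by right endpoints, and the later segment starts at most one past
the end of the earlier one. For `X = [a,b]` split the class into the segments starting at or
before `a` and those starting after `a`. The former have distinct left endpoints in `[0,a]`;
the latter are preceded by `X`, so they have distinct right endpoints in `(b,n]`: this gives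
`n - κ + 2`. For `κ + 1`, let `M` be the largest left endpoint in the class; every segment
ends at or after `M - 1`, so the former have distinct right endpoints in `[M-1,b]` and the
latter distinct left endpoints in `(a,M]`.
-/

/-- A segment of `[n]₀ = {0,...,n}`: a set `[a,b] = {x : a ≤ x ≤ b}` with
`0 ≤ a ≤ b ≤ n` that is a proper subset of `[n]₀`. -/
def IsSegment (n : ℕ) (S : Finset ℕ) : Prop :=
  ∃ a b : ℕ, a ≤ b ∧ b ≤ n ∧ S = Finset.Icc a b ∧ S ⊂ Finset.range (n + 1)

/-- The segment `[a,b]` precedes the segment `[c,d]` when `a+1 ≤ c ≤ b+1` and `b < d`. -/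
def SegPrecedes (n : ℕ) (S T : Finset ℕ) : Prop :=
  ∃ a b c d : ℕ, a ≤ b ∧ b ≤ n ∧ c ≤ d ∧ d ≤ n ∧
    S = Finset.Icc a b ∧ T = Finset.Icc c d ∧ a + 1 ≤ c ∧ c ≤ b + 1 ∧ b < d

/-- Two segments are separated when one of them precedes the other. -/
def SegSeparated (n : ℕ) (S T : Finset ℕ) : Prop :=
  SegPrecedes n S T ∨ SegPrecedes n T S

/-- A proper colouring of the `n`-dimensional associahedron with `m` colours:
a function from the segments of `[n]₀` to `{1,...,m}` such that any two distinct
segments of the same colour are separated. -/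
def IsProperColouringAssoc (n m : ℕ) (f : Finset ℕ → ℕ) : Prop :=
  (∀ S, IsSegment n S → f S ∈ Finset.Icc 1 m) ∧
  ∀ S T, IsSegment n S → IsSegment n T → S ≠ T → f S = f T → SegSeparated n S T

/-- The chromatic number `α_n` of the `n`-dimensional associahedron: the least `m`
for which a proper colouring with `m` colours exists. -/
noncomputable def assocChromatic (n : ℕ) : ℕ :=
  sInf {m : ℕ | ∃ f : Finset ℕ → ℕ, IsProperColouringAssoc n m f}

open Finset

/-- A pair `p` stands for the interval `[p.1, p.2]`. -/
def IntervalPrecedes (p q : ℕ × ℕ) : Prop :=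
  p.1 < q.1 ∧ q.1 ≤ p.2 + 1 ∧ p.2 < q.2

def IntervalSeparated (p q : ℕ × ℕ) : Prop :=
  IntervalPrecedes p q ∨ IntervalPrecedes q p

section IntervalFamily

variable {s : Finset (ℕ × ℕ)}

lemma fst_injOn_of_pairwise_intervalSeparated
    (hs : (s : Set (ℕ × ℕ)).Pairwise IntervalSeparated) : Set.InjOn Prod.fst (s : Set (ℕ × ℕ)) := by
  intro p hp q hq h
  by_contra hne
  rcases hs hp hq hne with h' | h' <;> simp only [IntervalPrecedes] at h' <;> omega

lemma snd_injOn_of_pairwise_intervalSeparated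
    (hs : (s : Set (ℕ × ℕ)).Pairwise IntervalSeparated) : Set.InjOn Prod.snd (s : Set (ℕ × ℕ)) := by
  intro p hp q hq h
  by_contra hne
  rcases hs hp hq hne with h' | h' <;> simp only [IntervalPrecedes] at h' <;> omega

lemma intervalPrecedes_of_fst_lt (hs : (s : Set (ℕ × ℕ)).Pairwise IntervalSeparated)
    {p q : ℕ × ℕ} (hp : p ∈ s) (hq : q ∈ s) (h : p.1 < q.1) : IntervalPrecedes p q := by
  rcases hs hp hq (by rintro rfl; omega) with h' | h'
  · exact h'
  · exact absurd h'.1 (by omega)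

lemma fst_le_snd_add_one_of_pairwise_intervalSeparated
    (hs : (s : Set (ℕ × ℕ)).Pairwise IntervalSeparated) (hle : ∀ p ∈ s, p.1 ≤ p.2)
    {p q : ℕ × ℕ} (hp : p ∈ s) (hq : q ∈ s) : q.1 ≤ p.2 + 1 := by
  obtain rfl | hne := eq_or_ne p q
  · exact (hle p hp).trans p.2.le_succ
  rcases hs hp hq hne with h | h
  · exact h.2.1
  · have := hle q hq
    have := h.2.2
    omega

lemma card_le_snd_sub_fst_add_two (hs : (s : Set (ℕ × ℕ)).Pairwise IntervalSeparated)
    (hle : ∀ p ∈ s, p.1 ≤ p.2) {x : ℕ × ℕ} (hx : x ∈ s) : #s ≤ x.2 - x.1 + 2 := by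
  set M := s.sup Prod.fst
  have hM : ∀ p ∈ s, M ≤ p.2 + 1 := fun p hp =>
    Finset.sup_le fun q hq => fst_le_snd_add_one_of_pairwise_intervalSeparated hs hle hp hq
  have hxM : x.1 ≤ M := le_sup (f := Prod.fst) hx
  have hstart : #(s.filter fun p => p.1 ≤ x.1) ≤ #(Icc (M - 1) x.2) := by
    refine card_le_card_of_injOn Prod.snd (fun p hp => ?_)
      ((snd_injOn_of_pairwise_intervalSeparated hs).mono (filter_subset _ _))
    obtain ⟨hp, hpx⟩ := mem_filter.1 hp
    have hpM := hM p hp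
    have hpx' : p.2 ≤ x.2 := by
      obtain rfl | hne := eq_or_ne p x
      · rfl
      have : p.1 ≠ x.1 := fun h => hne (fst_injOn_of_pairwise_intervalSeparated hs hp hx h)
      exact (intervalPrecedes_of_fst_lt hs hp hx (by omega)).2.2.le
    simp only [coe_Icc, Set.mem_Icc]
    omega
  have hlate : #(s.filter fun p => ¬p.1 ≤ x.1) ≤ #(Ioc x.1 M) := by
    refine card_le_card_of_injOn Prod.fst (fun p hp => ?_)
      ((fst_injOn_of_pairwise_intervalSeparated hs).mono (filter_subset _ _))
    obtain ⟨hp, hpx⟩ := mem_filter.1 hp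
    have : p.1 ≤ M := le_sup (f := Prod.fst) hp
    simp only [coe_Ioc, Set.mem_Ioc]
    omega
  have hxM' := hM x hx
  rw [← card_filter_add_card_filter_not fun p : ℕ × ℕ => p.1 ≤ x.1]
  rw [Nat.card_Icc] at hstart
  rw [Nat.card_Ioc] at hlate
  omega

lemma card_le_sub_snd_add_fst_add_one (hs : (s : Set (ℕ × ℕ)).Pairwise IntervalSeparated)
    {n : ℕ} (hn : ∀ p ∈ s, p.2 ≤ n) {x : ℕ × ℕ} (hx : x ∈ s) : #s ≤ n - x.2 + x.1 + 1 := by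
  have hstart : #(s.filter fun p => p.1 ≤ x.1) ≤ #(range (x.1 + 1)) := by
    refine card_le_card_of_injOn Prod.fst (fun p hp => ?_)
      ((fst_injOn_of_pairwise_intervalSeparated hs).mono (filter_subset _ _))
    simp only [coe_range, Set.mem_Iio]
    have := (mem_filter.1 hp).2
    omega
  have hlate : #(s.filter fun p => ¬p.1 ≤ x.1) ≤ #(Ioc x.2 n) := by
    refine card_le_card_of_injOn Prod.snd (fun p hp => ?_)
      ((snd_injOn_of_pairwise_intervalSeparated hs).mono (filter_subset _ _))
    obtain ⟨hp, hpx⟩ := mem_filter.1 hp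
    have := (intervalPrecedes_of_fst_lt hs hx hp (by omega)).2.2
    have := hn p hp
    simp only [coe_Ioc, Set.mem_Ioc]
    omega
  rw [← card_filter_add_card_filter_not fun p : ℕ × ℕ => p.1 ≤ x.1]
  rw [card_range] at hstart
  rw [Nat.card_Ioc] at hlate
  omega

end IntervalFamily

theorem Finset.Icc_eq_Icc_iff {α : Type*} [PartialOrder α] [LocallyFiniteOrder α] {a b c d : α}
    (h : a ≤ b) : Icc a b = Icc c d ↔ a = c ∧ b = d := by
  rw [← coe_inj, coe_Icc, coe_Icc, Set.Icc_eq_Icc_iff h]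

lemma SegPrecedes.intervalPrecedes {n a b c d : ℕ} (hab : a ≤ b) (hcd : c ≤ d)
    (h : SegPrecedes n (Icc a b) (Icc c d)) : IntervalPrecedes (a, b) (c, d) := by
  obtain ⟨a', b', c', d', -, -, -, -, hS, hT, h⟩ := h
  obtain ⟨rfl, rfl⟩ := (Icc_eq_Icc_iff hab).1 hS
  obtain ⟨rfl, rfl⟩ := (Icc_eq_Icc_iff hcd).1 hT
  exact ⟨by omega, h.2⟩

section SegmentFamily

variable {n : ℕ} {𝒴 : Set (Finset ℕ)}

open Classical in
noncomputable def segmentEndpoints (n : ℕ) (𝒴 : Set (Finset ℕ)) : Finset (ℕ × ℕ) :=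
  (range (n + 1) ×ˢ range (n + 1)).filter fun p => p.1 ≤ p.2 ∧ Icc p.1 p.2 ∈ 𝒴

lemma mem_segmentEndpoints {p : ℕ × ℕ} :
    p ∈ segmentEndpoints n 𝒴 ↔ p.1 ≤ p.2 ∧ p.2 ≤ n ∧ Icc p.1 p.2 ∈ 𝒴 := by
  simp only [segmentEndpoints, mem_filter, mem_product, mem_range]
  exact ⟨fun ⟨_, hle, hY⟩ => ⟨hle, by omega, hY⟩,
    fun ⟨hle, hn, hY⟩ => ⟨⟨by omega, by omega⟩, hle, hY⟩⟩

lemma ncard_le_card_segmentEndpoints (h𝒴 : ∀ Y ∈ 𝒴, IsSegment n Y) :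
    𝒴.ncard ≤ #(segmentEndpoints n 𝒴) := by
  have hsub : 𝒴 ⊆ ((segmentEndpoints n 𝒴).image fun p => Icc p.1 p.2 : Finset (Finset ℕ)) := by
    intro Y hY
    obtain ⟨a, b, hab, hbn, rfl, -⟩ := h𝒴 Y hY
    exact mem_image.2 ⟨(a, b), mem_segmentEndpoints.2 ⟨hab, hbn, hY⟩, rfl⟩
  calc 𝒴.ncard ≤ #((segmentEndpoints n 𝒴).image fun p => Icc p.1 p.2) := by
        simpa only [Set.ncard_coe_finset] using Set.ncard_le_ncard hsub
    _ ≤ #(segmentEndpoints n 𝒴) := card_image_le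

lemma pairwise_intervalSeparated_segmentEndpoints (h𝒴 : 𝒴.Pairwise (SegSeparated n)) :
    (segmentEndpoints n 𝒴 : Set (ℕ × ℕ)).Pairwise IntervalSeparated := by
  rintro ⟨a, b⟩ hp ⟨c, d⟩ hq hne
  obtain ⟨hab, -, hY⟩ := mem_segmentEndpoints.1 hp
  obtain ⟨hcd, -, hZ⟩ := mem_segmentEndpoints.1 hq
  have hYZ : Icc a b ≠ Icc c d := fun h => hne <| Prod.ext_iff.2 ((Icc_eq_Icc_iff hab).1 h)
  exact (h𝒴 hY hZ hYZ).imp (SegPrecedes.intervalPrecedes hab hcd)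
    (SegPrecedes.intervalPrecedes hcd hab)

lemma ncard_le_of_pairwise_segSeparated (h𝒴 : ∀ Y ∈ 𝒴, IsSegment n Y)
    (hsep : 𝒴.Pairwise (SegSeparated n)) {X : Finset ℕ} (hX : X ∈ 𝒴) :
    𝒴.ncard ≤ min (#X + 1) (n - #X + 2) := by
  obtain ⟨a, b, hab, hbn, rfl, -⟩ := h𝒴 X hX
  have hs := pairwise_intervalSeparated_segmentEndpoints hsep
  have hx : (a, b) ∈ segmentEndpoints n 𝒴 := mem_segmentEndpoints.2 ⟨hab, hbn, hX⟩
  have h₁ := card_le_snd_sub_fst_add_two hs (fun p hp => (mem_segmentEndpoints.1 hp).1) hx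
  have h₂ := card_le_sub_snd_add_fst_add_one hs (fun p hp => (mem_segmentEndpoints.1 hp).2.1) hx
  have := ncard_le_card_segmentEndpoints h𝒴
  rw [Nat.card_Icc]
  omega

end SegmentFamily

theorem colour_class_size_bound_general (n m : ℕ) (f : Finset ℕ → ℕ)
    (hf : IsProperColouringAssoc n m f) (X : Finset ℕ) (hX : IsSegment n X) :
    {Y : Finset ℕ | IsSegment n Y ∧ f Y = f X}.ncard ≤
      min (X.card + 1) (n - X.card + 2) :=
  ncard_le_of_pairwise_segSeparated (fun _ hY => hY.1)
    (fun Y hY Z hZ hne => hf.2 Y Z hY.1 hZ.1 hne (hY.2.trans hZ.2.symm)) ⟨hX, rfl⟩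

/-- Proposition 2: in a proper colouring of the `n`-dimensional associahedron, for a
facet (segment) `X` of cardinality `κ`, the number of segments `Y` with `f Y = f X`
(including `X` itself) is at most `min (κ + 1) (n - κ + 2)`. -/
theorem colour_class_size_bound (n m : ℕ) (hn : 1 ≤ n) (f : Finset ℕ → ℕ)
    (hf : IsProperColouringAssoc n m f) (X : Finset ℕ) (hX : IsSegment n X) :
    {Y : Finset ℕ | IsSegment n Y ∧ f Y = f X}.ncard ≤
      min (X.card + 1) (n - X.card + 2) :=
  colour_class_size_bound_general n m f hf X hX
end

section
/- For every n ≥ 2, the chromatic number of the n-dimensional cyclohedron satisfies γ_n ≤ Σ_{i=2}^{⌈n/2⌉+1} (A_i + 1), where A_i are defined by the recursion: B₂ = 0; B_i = n+1+B_{i−1}−(i−1)A_{i−1} for 2 < i ≤ ⌈n/2⌉+1; A_i = ⌈(n+1+B_i)/i⌉ if i ≤ ⌈n/2⌉, A_{⌈n/2⌉+1} = 1 if n is even, and A_{⌈n/2⌉+1} = 0 if n is odd. -/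
/-!
Cyclic segments are the arcs of `ℤ/(n+1)` with a start and a length `1 ≤ ℓ ≤ n`. Two distinct
arcs of the same length `ℓ ≥ ⌈n/2⌉` always follow or overlap one another, so each such length
needs a single colour. The shorter arcs are laid out in stages: stage `i ≤ ⌈n/2⌉` consists of
`i * A_i` arcs with consecutive starts, the first `n + 1 + B_i` of them of length `i - 1` and
the others of length `i`, so that the arcs of length `ℓ` are the tail of stage `ℓ` followed by
the head of stage `ℓ + 1`. Cutting stage `i` into `A_i` blocks of `i` consecutive arcs gives
colour classes: two arcs whose starts differ by `d < i` and whose lengths `ℓ ≤ ℓ'` lie in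
`{i - 1, i}` follow (`d = ℓ`) or overlap (`d < ℓ`). Altogether this uses
`∑_{i ≤ ⌈n/2⌉} A_i + (n + 1 - ⌈n/2⌉)` colours, and `n + 1 - ⌈n/2⌉ = ⌈n/2⌉ + A_{⌈n/2⌉+1}`.
-/

/-- The cyclic segment `[a,b]` of `[n]₀ = {0,...,n}`: the set
`{i : a ≤ i ≤ b}` if `a ≤ b`, and `{i : a ≤ i ≤ n} ∪ {i : 0 ≤ i ≤ b}` if `a > b`. -/
def CSeg (n a b : ℕ) : Finset ℕ :=
  if a ≤ b then Finset.Icc a b else Finset.Icc a n ∪ Finset.Icc 0 b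

/-- `(a, b)` are the endpoints of a genuine cyclic segment of `[n]₀`: `a, b ∈ [n]₀`
and `[a,b]` is a proper subset of `[n]₀`. -/
def IsCSeg (n a b : ℕ) : Prop :=
  a ≤ n ∧ b ≤ n ∧ CSeg n a b ⊂ Finset.range (n + 1)

/-- `[c,d]` overlaps `[a,b]`: `c > a` and the two cyclic segments are neither disjoint
nor comparable with respect to inclusion. -/
def COverlaps (n a b c d : ℕ) : Prop :=
  c > a ∧ (CSeg n a b ∩ CSeg n c d).Nonempty ∧
    ¬ CSeg n a b ⊆ CSeg n c d ∧ ¬ CSeg n c d ⊆ CSeg n a b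

/-- `[c,d]` follows `[a,b]`: `b ⊞ 1 = c`, where `⊞` is addition modulo `n + 1`. -/
def CFollows (n a b c d : ℕ) : Prop :=
  (b + 1) % (n + 1) = c

/-- `[a,b]` precedes `[c,d]`: `[c,d]` overlaps `[a,b]` or `[c,d]` follows `[a,b]`. -/
def CPrecedes (n a b c d : ℕ) : Prop :=
  COverlaps n a b c d ∨ CFollows n a b c d

/-- `X` is a cyclic segment of `[n]₀` (as a set). -/
def IsCSegSet (n : ℕ) (X : Finset ℕ) : Prop :=
  ∃ a b : ℕ, IsCSeg n a b ∧ X = CSeg n a b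

/-- Two cyclic segments are separated when one of them precedes the other. -/
def CSegSeparated (n : ℕ) (X Y : Finset ℕ) : Prop :=
  ∃ a b c d : ℕ, IsCSeg n a b ∧ IsCSeg n c d ∧ X = CSeg n a b ∧ Y = CSeg n c d ∧
    (CPrecedes n a b c d ∨ CPrecedes n c d a b)

/-- A proper colouring of the `n`-dimensional cyclohedron with `m` colours:
a function from the cyclic segments of `[n]₀` to `{1,...,m}` such that any two
distinct cyclic segments of the same colour are separated. -/
def IsProperColouringCyclo (n m : ℕ) (f : Finset ℕ → ℕ) : Prop :=
  (∀ X, IsCSegSet n X → f X ∈ Finset.Icc 1 m) ∧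
  ∀ X Y, IsCSegSet n X → IsCSegSet n Y → X ≠ Y → f X = f Y → CSegSeparated n X Y

/-- The chromatic number `γ_n` of the `n`-dimensional cyclohedron. -/
noncomputable def cycloChromatic (n : ℕ) : ℕ :=
  sInf {m : ℕ | ∃ f : Finset ℕ → ℕ, IsProperColouringCyclo n m f}

/-- The pair `(A_i, B_i)` of the cyclohedron recursion (at argument `j`, the index is
`i = j + 2`): `B₂ = 0`; `B_i = n + 1 + B_{i-1} - (i-1)·A_{i-1}` for `2 < i ≤ ⌈n/2⌉ + 1`;
`A_i = ⌈(n + 1 + B_i)/i⌉` if `i ≤ ⌈n/2⌉`, `A_{⌈n/2⌉+1} = 1` if `n` is even and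
`A_{⌈n/2⌉+1} = 0` if `n` is odd.  (Note `⌈n/2⌉ = (n+1)/2` in natural division.) -/
noncomputable def cycloAB (n : ℕ) : ℕ → ℤ × ℤ
  | 0 =>
      (if 2 ≤ (n + 1) / 2 then ⌈((n : ℚ) + 1) / 2⌉
        else if n % 2 = 0 then 1 else 0, 0)
  | j + 1 =>
      let p := cycloAB n j
      let B : ℤ := (n : ℤ) + 1 + p.2 - ((j : ℤ) + 2) * p.1
      (if j + 3 ≤ (n + 1) / 2 then ⌈((n : ℚ) + 1 + (B : ℚ)) / ((j : ℚ) + 3)⌉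
        else if n % 2 = 0 then 1 else 0, B)

/-- `A_i` from the cyclohedron recursion above, for `i ≥ 2`. -/
noncomputable def cycloA (n i : ℕ) : ℤ := (cycloAB n (i - 2)).1

namespace Cyclo

/-- The start `a` is not reduced mod `n + 1`, so that the stages below can be laid out at
unbounded positions. -/
def arc (n a ℓ : ℕ) : Finset ℕ :=
  (Finset.range ℓ).image fun t => (a + t) % (n + 1)

section Arc

variable {n a ℓ : ℕ}

theorem lt_of_mem_arc {x : ℕ} (hx : x ∈ arc n a ℓ) : x < n + 1 := by
  obtain ⟨t, -, rfl⟩ := Finset.mem_image.1 hx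
  exact Nat.mod_lt _ n.succ_pos

theorem add_mod_mem_arc_iff (s : ℕ) (hℓ : ℓ ≤ n + 1) :
    (a + s) % (n + 1) ∈ arc n a ℓ ↔ s % (n + 1) < ℓ := by
  simp only [arc, Finset.mem_image, Finset.mem_range]
  constructor
  · rintro ⟨t, ht, hts⟩
    have : t % (n + 1) = s % (n + 1) := Nat.ModEq.add_left_cancel' a hts
    rw [Nat.mod_eq_of_lt (by omega)] at this
    omega
  · exact fun hs => ⟨s % (n + 1), hs, Nat.add_mod_mod a s (n + 1)⟩

theorem mem_arc (ha : a < n + 1) (hℓ : ℓ ≤ n + 1) {x : ℕ} :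
    x ∈ arc n a ℓ ↔ x < n + 1 ∧ (a ≤ x ∧ x < a + ℓ ∨ x + (n + 1) < a + ℓ) := by
  by_cases hx : x < n + 1
  swap
  · exact iff_of_false (fun hmem => hx (lt_of_mem_arc hmem)) fun h => hx h.1
  rcases le_or_gt a x with hax | hxa
  · have key := add_mod_mem_arc_iff (a := a) (x - a) hℓ
    rw [Nat.add_sub_cancel' hax, Nat.mod_eq_of_lt hx, Nat.mod_eq_of_lt (by omega)] at key
    rw [key]
    omega
  · have key := add_mod_mem_arc_iff (a := a) (x + (n + 1) - a) hℓ
    rw [show a + (x + (n + 1) - a) = x + (n + 1) by omega, Nat.add_mod_right,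
      Nat.mod_eq_of_lt hx, Nat.mod_eq_of_lt (by omega)] at key
    rw [key]
    omega

theorem arc_congr_mod {b : ℕ} (h : a % (n + 1) = b % (n + 1)) : arc n a ℓ = arc n b ℓ := by
  refine Finset.image_congr fun t _ => ?_
  simp only [Nat.add_mod a, Nat.add_mod b, h]

theorem arc_add_modulus : arc n (a + (n + 1)) ℓ = arc n a ℓ :=
  arc_congr_mod (Nat.add_mod_right a (n + 1))

theorem exists_arc_eq_arc_add (w : ℕ) : ∃ t < n + 1, arc n a ℓ = arc n (w + t) ℓ := by
  have hw : w ≤ (n + 1) * w := Nat.le_mul_of_pos_left w n.succ_pos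
  refine ⟨(a + (n + 1) * w - w) % (n + 1), Nat.mod_lt _ n.succ_pos, arc_congr_mod ?_⟩
  rw [Nat.add_mod_mod, show w + (a + (n + 1) * w - w) = a + (n + 1) * w by omega,
    Nat.add_mul_mod_self_left]

theorem card_arc (hℓ : ℓ ≤ n + 1) : (arc n a ℓ).card = ℓ := by
  rw [arc, Finset.card_image_of_injOn, Finset.card_range]
  intro t ht t' ht' htt'
  have : t % (n + 1) = t' % (n + 1) := Nat.ModEq.add_left_cancel' a htt'
  simp only [Finset.coe_range, Set.mem_Iio] at ht ht'
  rwa [Nat.mod_eq_of_lt (by omega), Nat.mod_eq_of_lt (by omega)] at this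

theorem mem_cSeg {b x : ℕ} :
    x ∈ CSeg n a b ↔ if a ≤ b then a ≤ x ∧ x ≤ b else a ≤ x ∧ x ≤ n ∨ x ≤ b := by
  unfold CSeg
  split_ifs <;> simp [Finset.mem_Icc]

theorem isCSeg_arc (h1 : 1 ≤ ℓ) (hℓ : ℓ ≤ n) :
    IsCSeg n (a % (n + 1)) ((a + (ℓ - 1)) % (n + 1)) ∧
      arc n a ℓ = CSeg n (a % (n + 1)) ((a + (ℓ - 1)) % (n + 1)) := by
  have ha : a % (n + 1) < n + 1 := Nat.mod_lt _ n.succ_pos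
  have hE : arc n a ℓ = CSeg n (a % (n + 1)) ((a + (ℓ - 1)) % (n + 1)) := by
    rw [arc_congr_mod (Nat.mod_mod a (n + 1)).symm, ← Nat.mod_add_mod]
    generalize a % (n + 1) = a at ha ⊢
    ext x
    rw [mem_arc ha (by omega), mem_cSeg]
    rcases lt_or_ge (a + (ℓ - 1)) (n + 1) with h | h
    · rw [Nat.mod_eq_of_lt h]
      split_ifs <;> omega
    · rw [Nat.mod_eq_sub_mod h, Nat.mod_eq_of_lt (by omega)]
      split_ifs <;> omega
  refine ⟨⟨by omega, Nat.le_of_lt_succ (Nat.mod_lt _ n.succ_pos), ?_⟩, hE⟩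
  rw [← hE, Finset.ssubset_iff_subset_ne]
  refine ⟨fun x hx => Finset.mem_range.2 (lt_of_mem_arc hx), fun h => ?_⟩
  have := congrArg Finset.card h
  rw [card_arc (by omega), Finset.card_range] at this
  omega

theorem exists_arc_of_isCSegSet {X : Finset ℕ} (hX : IsCSegSet n X) :
    ∃ a < n + 1, ∃ ℓ, 1 ≤ ℓ ∧ ℓ ≤ n ∧ X = arc n a ℓ := by
  obtain ⟨a, b, ⟨ha, hb, hproper⟩, rfl⟩ := hX
  set ℓ := if a ≤ b then b - a + 1 else b + (n + 1) - a + 1 with hℓ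
  have hE : CSeg n a b = arc n a ℓ := by
    ext x
    rw [mem_arc (by omega) (by split_ifs at hℓ <;> omega), mem_cSeg]
    split_ifs at hℓ ⊢ <;> omega
  refine ⟨a, by omega, ℓ, by split_ifs at hℓ <;> omega, ?_, hE⟩
  have := Finset.card_lt_card hproper
  rw [hE, card_arc (by split_ifs at hℓ <;> omega), Finset.card_range] at this
  omega

end Arc

section Separation

variable {n : ℕ}

theorem CSegSeparated.symm {X Y : Finset ℕ} (h : CSegSeparated n X Y) : CSegSeparated n Y X := by
  obtain ⟨a, b, c, d, hab, hcd, hX, hY, hprec⟩ := h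
  exact ⟨c, d, a, b, hcd, hab, hY, hX, hprec.symm⟩

theorem cSegSeparated_of_crossing {a b c d : ℕ} (hab : IsCSeg n a b) (hcd : IsCSeg n c d)
    (hac : a ≠ c) (hmeet : (CSeg n a b ∩ CSeg n c d).Nonempty)
    (hXY : ¬ CSeg n a b ⊆ CSeg n c d) (hYX : ¬ CSeg n c d ⊆ CSeg n a b) :
    CSegSeparated n (CSeg n a b) (CSeg n c d) := by
  refine ⟨a, b, c, d, hab, hcd, rfl, rfl, ?_⟩
  rcases hac.lt_or_gt with h | h
  · exact Or.inl (Or.inl ⟨h, hmeet, hXY, hYX⟩)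
  · exact Or.inr (Or.inl ⟨h, Finset.inter_comm (CSeg n a b) _ ▸ hmeet, hYX, hXY⟩)

/-- The second arc follows the first when `d = ℓ` and overlaps it when `d < ℓ`; `hwrap` keeps
it from wrapping around onto the whole first arc. -/
theorem arc_separated_arc_add {a ℓ d ℓ' : ℕ} (hd : 1 ≤ d) (hdℓ : d ≤ ℓ) (hℓℓ' : ℓ ≤ ℓ')
    (hℓ' : ℓ' ≤ n) (hwrap : d + ℓ' ≤ n + ℓ) :
    CSegSeparated n (arc n a ℓ) (arc n (a + d) ℓ') := by
  obtain ⟨hX, hXe⟩ := isCSeg_arc (a := a) (by omega) (by omega : ℓ ≤ n)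
  obtain ⟨hY, hYe⟩ := isCSeg_arc (a := a + d) (by omega) hℓ'
  have memX (s : ℕ) := add_mod_mem_arc_iff (a := a) s (by omega : ℓ ≤ n + 1)
  have memY (s : ℕ) := add_mod_mem_arc_iff (a := a + d) s (by omega : ℓ' ≤ n + 1)
  rcases hdℓ.lt_or_eq with hlt | rfl
  · have hstart : a % (n + 1) ≠ (a + d) % (n + 1) := fun h => by
      have : 0 % (n + 1) = d % (n + 1) := Nat.ModEq.add_left_cancel' a h
      rw [Nat.zero_mod, Nat.mod_eq_of_lt (by omega)] at this
      omega
    have hmeet : (a + d) % (n + 1) ∈ arc n a ℓ ∩ arc n (a + d) ℓ' := by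
      refine Finset.mem_inter.2 ⟨(memX d).2 ?_, by simpa only [add_zero] using (memY 0).2 (by rw [Nat.zero_mod]; omega)⟩
      rw [Nat.mod_eq_of_lt (by omega)]
      exact hlt
    have hXY : ¬ arc n a ℓ ⊆ arc n (a + d) ℓ' := by
      intro hsub
      by_cases hreach : d + ℓ' ≤ n
      · have := (memY (n + 1 - d)).1 (by
          rw [show a + d + (n + 1 - d) = a + (n + 1) by omega, Nat.add_mod_right]
          simpa only [add_zero] using hsub ((memX 0).2 (by rw [Nat.zero_mod]; omega)))
        rw [Nat.mod_eq_of_lt (by omega)] at this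
        omega
      · have := (memY ℓ').1 (by
          rw [show a + d + ℓ' = a + (d + ℓ' - (n + 1)) + (n + 1) by omega, Nat.add_mod_right]
          exact hsub ((memX _).2 (by rw [Nat.mod_eq_of_lt (by omega)]; omega)))
        rw [Nat.mod_eq_of_lt (by omega)] at this
        omega
    have hYX : ¬ arc n (a + d) ℓ' ⊆ arc n a ℓ := by
      intro hsub
      have := (memX ℓ).1 (by
        rw [show a + ℓ = a + d + (ℓ - d) by omega]
        exact hsub ((memY _).2 (by rw [Nat.mod_eq_of_lt (by omega)]; omega)))
      rw [Nat.mod_eq_of_lt (by omega)] at this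
      omega
    rw [hXe, hYe] at hmeet hXY hYX ⊢
    exact cSegSeparated_of_crossing hX hY hstart ⟨_, hmeet⟩ hXY hYX
  · refine ⟨_, _, _, _, hX, hY, hXe, hYe, Or.inl (Or.inr ?_)⟩
    show ((a + (d - 1)) % (n + 1) + 1) % (n + 1) = (a + d) % (n + 1)
    rw [Nat.mod_add_mod]
    congr 1
    omega

theorem arc_separated_arc_of_le_two_mul {a c ℓ : ℕ} (ha : a < n + 1) (hc : c < n + 1)
    (hac : a ≠ c) (hℓ : ℓ ≤ n) (hhalf : n ≤ 2 * ℓ) :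
    CSegSeparated n (arc n a ℓ) (arc n c ℓ) := by
  wlog h : a < c generalizing a c
  · exact CSegSeparated.symm (this hc ha hac.symm (by omega))
  by_cases hd : c - a ≤ ℓ
  · have := arc_separated_arc_add (n := n) (a := a) (d := c - a) (ℓ' := ℓ)
      (by omega) hd le_rfl hℓ (by omega)
    rwa [Nat.add_sub_cancel' h.le] at this
  · have := arc_separated_arc_add (n := n) (a := c) (d := a + (n + 1) - c) (ℓ' := ℓ)
      (by omega) (by omega) le_rfl hℓ (by omega)
    rw [show c + (a + (n + 1) - c) = a + (n + 1) by omega, arc_add_modulus] at this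
    exact CSegSeparated.symm this

end Separation

/-- Stage `i` (for `2 ≤ i ≤ ⌈n/2⌉`) uses `A i` colours, each for `i` arcs with consecutive
starts; the first `r i` arcs of the stage have length `i - 1`, the others length `i`.
In the paper's notation `r i = n + 1 + B_i`. -/
structure IsStaging (n : ℕ) (A r : ℕ → ℕ) : Prop where
  r_two : r 2 = n + 1
  le_mul : ∀ i, 2 ≤ i → i ≤ (n + 1) / 2 → r i ≤ i * A i
  r_succ : ∀ i, 2 ≤ i → i < (n + 1) / 2 → r (i + 1) + i * A i = n + 1 + r i

def stageStart (A : ℕ → ℕ) (i : ℕ) : ℕ :=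
  ∑ j ∈ Finset.Ico 2 i, j * A j

def stageArc (n : ℕ) (A r : ℕ → ℕ) (i v : ℕ) : Finset ℕ :=
  arc n (stageStart A i + v) (if v < r i then i - 1 else i)

section Staging

variable {n : ℕ} {A r : ℕ → ℕ}

theorem stageStart_succ {i : ℕ} (hi : 2 ≤ i) : stageStart A (i + 1) = stageStart A i + i * A i :=
  Finset.sum_Ico_succ_top hi _

theorem stageArc_separated {i v v' : ℕ} (hi : 2 ≤ i) (hiK : i ≤ (n + 1) / 2) (hvv' : v ≠ v')
    (hq : v / i = v' / i) : CSegSeparated n (stageArc n A r i v) (stageArc n A r i v') := by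
  wlog h : v < v' generalizing v v'
  · exact CSegSeparated.symm (this hvv'.symm hq.symm (by omega))
  have hdist : v' - v < i := by
    have hv := Nat.div_add_mod v i
    have hv' := Nat.div_add_mod v' i
    have := Nat.mod_lt v' (by omega : 0 < i)
    rw [hq] at hv
    omega
  unfold stageArc
  rw [show stageStart A i + v' = stageStart A i + v + (v' - v) by omega]
  apply arc_separated_arc_add <;> (try split_ifs) <;> omega

/-- The arcs of length `ℓ` are those of stage `ℓ` with `v ≥ r ℓ`, followed by those of
stage `ℓ + 1` with `v < r (ℓ + 1)`: `n + 1` consecutive starts in all. -/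
theorem exists_stageArc_eq (hs : IsStaging n A r) {ℓ : ℕ} (hℓ : 1 ≤ ℓ) (hℓK : ℓ < (n + 1) / 2)
    (a : ℕ) : ∃ i v, 2 ≤ i ∧ i ≤ (n + 1) / 2 ∧ v < i * A i ∧ arc n a ℓ = stageArc n A r i v := by
  rcases hℓ.eq_or_lt with rfl | hℓ2
  · obtain ⟨t, ht, heq⟩ := exists_arc_eq_arc_add (n := n) (a := a) (ℓ := 1) 0
    have hr := hs.le_mul 2 le_rfl (by omega)
    have hr2 := hs.r_two
    refine ⟨2, t, le_rfl, by omega, by omega, ?_⟩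
    rw [heq, stageArc, if_pos (by omega)]
    simp [stageStart]
  obtain ⟨t, ht, heq⟩ := exists_arc_eq_arc_add (n := n) (a := a) (ℓ := ℓ) (stageStart A ℓ + r ℓ)
  have hstep := hs.r_succ ℓ hℓ2 hℓK
  have hle := hs.le_mul ℓ hℓ2 hℓK.le
  have hle' := hs.le_mul (ℓ + 1) (by omega) hℓK
  by_cases hslack : r ℓ + t < ℓ * A ℓ
  · refine ⟨ℓ, r ℓ + t, hℓ2, hℓK.le, hslack, ?_⟩
    rw [heq, stageArc, if_neg (by omega), add_assoc]
  · refine ⟨ℓ + 1, r ℓ + t - ℓ * A ℓ, by omega, hℓK, by omega, ?_⟩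
    rw [heq, stageArc, if_pos (by omega), stageStart_succ hℓ2, Nat.add_sub_cancel]
    congr 1
    omega

end Staging

section Colouring

variable {n : ℕ}

theorem cycloChromatic_le_card_of_cover {ι : Type*} (I : Finset ι) (C : ι → Finset ℕ → Prop)
    (hcover : ∀ X, IsCSegSet n X → ∃ k ∈ I, C k X)
    (hsep : ∀ k ∈ I, ∀ X Y, IsCSegSet n X → IsCSegSet n Y → C k X → C k Y → X ≠ Y →
      CSegSeparated n X Y) :
    cycloChromatic n ≤ I.card := by
  classical
  choose κ hκI hκC using hcover
  let f : Finset ℕ → ℕ := fun X =>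
    if h : IsCSegSet n X then I.equivFin ⟨κ X h, hκI X h⟩ + 1 else 0
  refine Nat.sInf_le ⟨f, fun X hX => ?_, fun X Y hX hY hXY hf => ?_⟩
  · simp only [f, dif_pos hX, Finset.mem_Icc]
    omega
  · simp only [f, dif_pos hX, dif_pos hY, add_left_inj] at hf
    have hk : κ X hX = κ Y hY := congrArg Subtype.val (I.equivFin.injective (Fin.ext hf))
    exact hsep _ (hκI X hX) X Y hX hY (hκC X hX) (hk ▸ hκC Y hY) hXY

theorem cycloChromatic_le_of_isStaging {A r : ℕ → ℕ} (hs : IsStaging n A r) :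
    cycloChromatic n ≤ ∑ i ∈ Finset.Icc 2 ((n + 1) / 2), A i + (n + 1 - (n + 1) / 2) := by
  let I := ((Finset.Icc 2 ((n + 1) / 2)).sigma fun i => Finset.range (A i)).disjSum
    (Finset.Icc ((n + 1) / 2) n)
  let C : (Σ _ : ℕ, ℕ) ⊕ ℕ → Finset ℕ → Prop :=
    Sum.elim (fun p X => ∃ v, v / p.1 = p.2 ∧ X = stageArc n A r p.1 v) fun ℓ X => X.card = ℓ
  have hI : I.card = ∑ i ∈ Finset.Icc 2 ((n + 1) / 2), A i + (n + 1 - (n + 1) / 2) := by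
    simp [I, Finset.card_disjSum, Finset.card_sigma]
  rw [← hI]
  refine cycloChromatic_le_card_of_cover I C (fun X hX => ?_) ?_
  · obtain ⟨a, ha, ℓ, h1, hℓ, rfl⟩ := exists_arc_of_isCSegSet hX
    by_cases hlong : (n + 1) / 2 ≤ ℓ
    · exact ⟨.inr ℓ, by simp [I, hlong, hℓ], card_arc (by omega)⟩
    obtain ⟨i, v, hi, hiK, hv, heq⟩ := exists_stageArc_eq hs h1 (by omega) a
    refine ⟨.inl ⟨i, v / i⟩, ?_, v, rfl, heq⟩
    simp [I, hi, hiK, Nat.div_lt_iff_lt_mul (by omega : 0 < i), mul_comm, hv]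
  · rintro (⟨i, j⟩ | ℓ) hk X Y hX hY hXk hYk hXY
    · simp only [C, Sum.elim_inl] at hXk hYk
      obtain ⟨v, rfl, rfl⟩ := hXk
      obtain ⟨v', hv', rfl⟩ := hYk
      simp only [I, Finset.inl_mem_disjSum, Finset.mem_sigma, Finset.mem_Icc] at hk
      obtain ⟨⟨hi, hiK⟩, -⟩ := hk
      exact stageArc_separated hi hiK (by rintro rfl; exact hXY rfl) hv'.symm
    · obtain ⟨a, ha, ℓa, -, hℓa, rfl⟩ := exists_arc_of_isCSegSet hX
      obtain ⟨c, hc, ℓc, -, hℓc, rfl⟩ := exists_arc_of_isCSegSet hY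
      simp only [I, Finset.inr_mem_disjSum, Finset.mem_Icc] at hk
      simp only [C, Sum.elim_inr, card_arc (by omega : ℓa ≤ n + 1),
        card_arc (by omega : ℓc ≤ n + 1)] at hXk hYk
      subst hXk hYk
      exact arc_separated_arc_of_le_two_mul ha hc (by rintro rfl; exact hXY rfl) hℓa (by omega)

end Colouring

/-- `B_i` from the recursion `cycloAB`, for `i ≥ 2`. -/
noncomputable def cycloB (n i : ℕ) : ℤ := (cycloAB n (i - 2)).2

section Recursion

variable {n i : ℕ}

theorem cycloB_two : cycloB n 2 = 0 := rfl

theorem le_mul_ceil_div_and_lt (R : ℤ) (hi : 0 < i) :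
    R ≤ i * ⌈(R : ℚ) / i⌉ ∧ i * ⌈(R : ℚ) / i⌉ < R + i := by
  rw [Rat.ceil_intCast_div_natCast]
  have hlow := Int.ediv_mul_le (-R) (by omega : (i : ℤ) ≠ 0)
  have hup := Int.lt_ediv_add_one_mul_self (-R) (by omega : (0 : ℤ) < i)
  constructor <;> linarith

theorem cycloB_succ (hi : 2 ≤ i) : cycloB n (i + 1) = n + 1 + cycloB n i - i * cycloA n i := by
  obtain ⟨j, rfl⟩ : ∃ j, i = j + 2 := ⟨i - 2, by omega⟩
  simp only [cycloB, cycloA, cycloAB, Nat.add_sub_cancel, show j + 2 + 1 - 2 = j + 1 by omega]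
  push_cast
  ring

theorem cycloA_eq_ceil (hi : 2 ≤ i) (hiK : i ≤ (n + 1) / 2) :
    cycloA n i = ⌈((n : ℚ) + 1 + cycloB n i) / i⌉ := by
  obtain ⟨j, rfl⟩ : ∃ j, i = j + 2 := ⟨i - 2, by omega⟩
  cases j with
  | zero => simp [cycloA, cycloB, cycloAB, hiK]
  | succ j =>
    simp only [cycloA, cycloB, cycloAB, Nat.add_sub_cancel, if_pos (by omega : j + 3 ≤ (n + 1) / 2)]
    push_cast
    ring_nf

theorem cycloA_half_succ : cycloA n ((n + 1) / 2 + 1) = if n % 2 = 0 then 1 else 0 := by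
  rcases Nat.lt_or_ge ((n + 1) / 2) 2 with h | h
  · simp [cycloA, cycloAB, show (n + 1) / 2 + 1 - 2 = 0 by omega, show ¬ 2 ≤ (n + 1) / 2 by omega]
  · obtain ⟨j, hj⟩ : ∃ j, (n + 1) / 2 + 1 - 2 = j + 1 := ⟨(n + 1) / 2 - 2, by omega⟩
    simp [cycloA, cycloAB, hj, show ¬ j + 3 ≤ (n + 1) / 2 by omega]

theorem cycloA_bounds (hi : 2 ≤ i) (hiK : i ≤ (n + 1) / 2) :
    n + 1 + cycloB n i ≤ i * cycloA n i ∧ i * cycloA n i < n + 1 + cycloB n i + i := by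
  rw [cycloA_eq_ceil hi hiK]
  exact_mod_cast le_mul_ceil_div_and_lt (n + 1 + cycloB n i) (by omega)

theorem neg_succ_le_cycloB (hi : 2 ≤ i) (hiK : i ≤ (n + 1) / 2) : -((n : ℤ) + 1) ≤ cycloB n i := by
  induction i, hi using Nat.le_induction with
  | base => rw [cycloB_two]; omega
  | succ i hi ih =>
    have := (cycloA_bounds (n := n) hi (by omega)).2
    rw [cycloB_succ hi]
    omega

theorem cycloA_nonneg (hi : 2 ≤ i) (hiK : i ≤ (n + 1) / 2) : 0 ≤ cycloA n i := by
  have := (cycloA_bounds hi hiK).1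
  have := neg_succ_le_cycloB hi hiK
  nlinarith

theorem isStaging_cyclo :
    IsStaging n (fun i => (cycloA n i).toNat) (fun i => (n + 1 + cycloB n i).toNat) where
  r_two := by simp [cycloB_two]
  le_mul i hi hiK := by
    have := (cycloA_bounds hi hiK).1
    have := neg_succ_le_cycloB hi hiK
    have : (i : ℤ) * (cycloA n i).toNat = i * cycloA n i := by
      rw [Int.toNat_of_nonneg (cycloA_nonneg hi hiK)]
    omega
  r_succ i hi hiK := by
    have := cycloB_succ (n := n) hi
    have := neg_succ_le_cycloB hi hiK.le
    have := neg_succ_le_cycloB (n := n) (by omega : 2 ≤ i + 1) hiK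
    have : (i : ℤ) * (cycloA n i).toNat = i * cycloA n i := by
      rw [Int.toNat_of_nonneg (cycloA_nonneg hi hiK.le)]
    omega

theorem sum_cycloA_add_one (hn : 1 ≤ n) :
    ∑ i ∈ Finset.Icc 2 ((n + 1) / 2 + 1), (cycloA n i + 1) =
      ((∑ i ∈ Finset.Icc 2 ((n + 1) / 2), (cycloA n i).toNat + (n + 1 - (n + 1) / 2) : ℕ) : ℤ) := by
  have htoNat : ∑ i ∈ Finset.Icc 2 ((n + 1) / 2), cycloA n i =
      ∑ i ∈ Finset.Icc 2 ((n + 1) / 2), ((cycloA n i).toNat : ℤ) :=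
    Finset.sum_congr rfl fun i hi => by
      rw [Finset.mem_Icc] at hi
      rw [Int.toNat_of_nonneg (cycloA_nonneg hi.1 hi.2)]
  rw [Finset.sum_Icc_succ_top (by omega), Finset.sum_add_distrib, htoNat, cycloA_half_succ]
  simp only [Finset.sum_const, Nat.card_Icc, nsmul_one]
  push_cast
  split_ifs <;> omega

end Recursion

end Cyclo

/-- Theorem: `γ_n ≤ Σ_{i=2}^{⌈n/2⌉+1} (A_i + 1)`. -/
theorem cycloChromatic_le_sum (n : ℕ) (hn : 2 ≤ n) :
    (cycloChromatic n : ℤ) ≤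
      ∑ i ∈ Finset.Icc 2 ((n + 1) / 2 + 1), (cycloA n i + 1) := by
  rw [Cyclo.sum_cycloA_add_one (by omega)]
  exact_mod_cast Cyclo.cycloChromatic_le_of_isStaging Cyclo.isStaging_cyclo
end

section
/- For every n ≥ 1, there exists a proper colouring of the facets of the n-dimensional stellohedron with 2n − 1 − ⌊(n−1)/2⌋ colours; consequently σ_n ≤ 2n − 1 − ⌊(n−1)/2⌋. -/
/-- A facet of the `n`-dimensional stellohedron: a proper subset of `[n]₀ = {0,...,n}`
containing `0`, or a singleton `{i}` with `1 ≤ i ≤ n`. -/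
def StellFacet (n : ℕ) (X : Finset ℕ) : Prop :=
  (0 ∈ X ∧ X ⊂ Finset.range (n + 1)) ∨ ∃ i : ℕ, 1 ≤ i ∧ i ≤ n ∧ X = {i}

/-- Two facets of the stellohedron are separated when they are incomparable with
respect to inclusion and their union contains `0`. -/
def StellSeparated (X Y : Finset ℕ) : Prop :=
  ¬ X ⊆ Y ∧ ¬ Y ⊆ X ∧ 0 ∈ X ∪ Y

/-- A proper colouring of the facets of the `n`-dimensional stellohedron with `m`
colours: any two distinct facets of the same colour are separated. -/
def IsProperColouringStell (n m : ℕ) (f : Finset ℕ → ℕ) : Prop :=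
  (∀ X, StellFacet n X → f X ∈ Finset.Icc 1 m) ∧
  ∀ X Y, StellFacet n X → StellFacet n Y → X ≠ Y → f X = f Y → StellSeparated X Y

/-- The chromatic number `σ_n` of the `n`-dimensional stellohedron. -/
noncomputable def stellChromatic (n : ℕ) : ℕ :=
  sInf {m : ℕ | ∃ f : Finset ℕ → ℕ, IsProperColouringStell n m f}

/-! Colour the singleton `{i}` by `i`, and a facet containing `0` according to its complement
`C ⊆ [1, n]` in `[n]₀`. When `2 * #C > n`, the colour is the pivot of `C`: the element of `C` with
exactly `n + 1 - #C` elements of `C` at or above it. Passing to a larger complement can only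
raise the number of elements above a fixed value but lowers `n + 1 - #C`, so nested facets get
different pivots; and the pivot, lying in `C`, is missing from the facet, which is therefore
separated from the singleton of the same colour. The remaining facets, with `1 ≤ #C ≤ n / 2`,
share `n / 2` further colours according to `#C`, and facets of equal size are incomparable. -/

open Finset

theorem Finset.exists_mem_card_filter_le_eq {α : Type*} [LinearOrder α] (s : Finset α)
    {r : ℕ} (hr : 1 ≤ r) (hrs : r ≤ #s) : ∃ g ∈ s, #{x ∈ s | g ≤ x} = r := by
  induction s using Finset.induction_on_max generalizing r with
  | empty => rw [card_empty] at hrs; omega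
  | insert a s ha ih =>
    have has : a ∉ s := fun h => lt_irrefl a (ha a h)
    rw [card_insert_of_notMem has] at hrs
    rcases hr.eq_or_lt with rfl | hr
    · refine ⟨a, mem_insert_self a s, ?_⟩
      rw [filter_insert, if_pos le_rfl, filter_false_of_mem fun x hx => not_le.2 (ha x hx)]
      rfl
    · obtain ⟨g, hg, hcard⟩ := ih (r := r - 1) (by omega) (by omega)
      refine ⟨g, mem_insert_of_mem hg, ?_⟩
      rw [filter_insert, if_pos (ha g hg).le,
        card_insert_of_notMem fun h => has (mem_filter.1 h).1, hcard]
      omega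

theorem StellSeparated.symm {X Y : Finset ℕ} (h : StellSeparated X Y) : StellSeparated Y X :=
  ⟨h.2.1, h.1, union_comm X Y ▸ h.2.2⟩

namespace Stellohedron

noncomputable def pivot (n : ℕ) (C : Finset ℕ) : ℕ :=
  if h : #C ≤ n ∧ n + 1 ≤ 2 * #C then
    (exists_mem_card_filter_le_eq C (r := n + 1 - #C) (by omega) (by omega)).choose
  else 0

theorem pivot_spec {n : ℕ} {C : Finset ℕ} (hC : #C ≤ n) (hC' : n + 1 ≤ 2 * #C) :
    pivot n C ∈ C ∧ #{x ∈ C | pivot n C ≤ x} = n + 1 - #C := by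
  rw [pivot, dif_pos ⟨hC, hC'⟩]
  exact (exists_mem_card_filter_le_eq C (r := n + 1 - #C) (by omega) (by omega)).choose_spec

theorem pivot_ne_of_ssubset {n : ℕ} {C C' : Finset ℕ} (h : C' ⊂ C) (hC : #C ≤ n)
    (hC' : n + 1 ≤ 2 * #C') : pivot n C' ≠ pivot n C := by
  have hlt : #C' < #C := card_lt_card h
  obtain ⟨-, hcount'⟩ := pivot_spec (hlt.le.trans hC) hC'
  obtain ⟨-, hcount⟩ := pivot_spec hC (by omega)
  intro heq
  have := card_le_card (filter_subset_filter (pivot n C ≤ ·) h.subset)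
  rw [← heq, hcount', heq, hcount] at this
  omega

noncomputable def complColour (n : ℕ) (C : Finset ℕ) : ℕ :=
  if n + 1 ≤ 2 * #C then pivot n C else n + n / 2 + 1 - #C

noncomputable def colouring (n : ℕ) (X : Finset ℕ) : ℕ :=
  if 0 ∈ X then complColour n (range (n + 1) \ X) else X.sup id

section complColour

variable {n : ℕ} {C : Finset ℕ}

theorem card_le_of_subset_Icc (hC : C ⊆ Icc 1 n) : #C ≤ n := by
  simpa using card_le_card hC

theorem complColour_mem_Icc (hC : C ⊆ Icc 1 n) (hne : C.Nonempty) :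
    complColour n C ∈ Icc 1 (n + n / 2) := by
  have hcard := card_le_of_subset_Icc hC
  have hpos := hne.card_pos
  rw [complColour]
  split_ifs with hbig
  · have := mem_Icc.1 (hC (pivot_spec hcard hbig).1)
    exact mem_Icc.2 (by omega)
  · exact mem_Icc.2 (by omega)

theorem complColour_mem (hC : C ⊆ Icc 1 n) (hcol : complColour n C ≤ n) :
    complColour n C ∈ C := by
  rw [complColour] at hcol ⊢
  split_ifs at hcol ⊢ with hbig
  · exact (pivot_spec (card_le_of_subset_Icc hC) hbig).1
  · omega

theorem complColour_ne_of_ssubset {C' : Finset ℕ} (h : C' ⊂ C) (hne : C'.Nonempty)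
    (hC : C ⊆ Icc 1 n) : complColour n C' ≠ complColour n C := by
  have hlt : #C' < #C := card_lt_card h
  have hpos := hne.card_pos
  have hcard := card_le_of_subset_Icc hC
  unfold complColour
  split_ifs with hbig' hbig hbig
  · exact pivot_ne_of_ssubset h hcard hbig'
  · omega
  · have := mem_Icc.1 (hC (pivot_spec hcard hbig).1)
    omega
  · omega

end complColour

section colouring

variable {n : ℕ} {X Y : Finset ℕ}

theorem sdiff_subset_Icc (h0 : 0 ∈ X) : range (n + 1) \ X ⊆ Icc 1 n := by
  intro x hx
  rw [mem_sdiff, mem_range] at hx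
  have : x ≠ 0 := fun h => hx.2 (h ▸ h0)
  exact mem_Icc.2 (by omega)

theorem colouring_singleton {i : ℕ} (hi : 1 ≤ i) : colouring n {i} = i := by
  rw [colouring, if_neg (by rw [mem_singleton]; omega), sup_singleton, id]

theorem colouring_ne_of_ssubset (h0 : 0 ∈ X) (hY : Y ⊂ range (n + 1)) (h : X ⊂ Y) :
    colouring n X ≠ colouring n Y := by
  rw [colouring, colouring, if_pos h0, if_pos (h.subset h0)]
  obtain ⟨y, hyY, hyX⟩ := exists_of_ssubset h
  have hcompl : range (n + 1) \ Y ⊂ range (n + 1) \ X :=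
    (ssubset_iff_of_subset (sdiff_subset_sdiff le_rfl h.subset)).2
      ⟨y, mem_sdiff.2 ⟨hY.subset hyY, hyX⟩, fun hy => (mem_sdiff.1 hy).2 hyY⟩
  exact (complColour_ne_of_ssubset hcompl (sdiff_nonempty.2 hY.2) (sdiff_subset_Icc h0)).symm

theorem stellSeparated_of_colouring_eq (h0X : 0 ∈ X) (hX : X ⊂ range (n + 1)) (h0Y : 0 ∈ Y)
    (hY : Y ⊂ range (n + 1)) (hne : X ≠ Y) (hcol : colouring n X = colouring n Y) :
    StellSeparated X Y :=
  ⟨fun h => colouring_ne_of_ssubset h0X hY (ssubset_of_subset_of_ne h hne) hcol,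
    fun h => colouring_ne_of_ssubset h0Y hX (ssubset_of_subset_of_ne h hne.symm) hcol.symm,
    mem_union_left Y h0X⟩

theorem stellSeparated_singleton_of_colouring_eq (h0 : 0 ∈ X) {j : ℕ} (hj : 1 ≤ j)
    (hjn : j ≤ n) (hcol : colouring n X = j) : StellSeparated X {j} := by
  rw [colouring, if_pos h0] at hcol
  have hjX : j ∉ X := (mem_sdiff.1 (hcol ▸ complColour_mem (sdiff_subset_Icc h0) (by omega))).2
  refine ⟨fun h => ?_, fun h => hjX (h (mem_singleton_self j)), mem_union_left _ h0⟩
  have := mem_singleton.1 (h h0)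
  omega

theorem isProperColouringStell_colouring (n : ℕ) :
    IsProperColouringStell n (n + n / 2) (colouring n) := by
  refine ⟨?_, ?_⟩
  · rintro X (⟨h0, hX⟩ | ⟨i, hi, hin, rfl⟩)
    · rw [colouring, if_pos h0]
      exact complColour_mem_Icc (sdiff_subset_Icc h0) (sdiff_nonempty.2 hX.2)
    · rw [colouring_singleton hi, mem_Icc]
      omega
  · rintro X Y (⟨h0X, hX⟩ | ⟨i, hi, hin, rfl⟩) (⟨h0Y, hY⟩ | ⟨j, hj, hjn, rfl⟩) hne hcol
    · exact stellSeparated_of_colouring_eq h0X hX h0Y hY hne hcol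
    · exact stellSeparated_singleton_of_colouring_eq h0X hj hjn
        (hcol.trans (colouring_singleton hj))
    · exact (stellSeparated_singleton_of_colouring_eq h0Y hi hin
        (hcol.symm.trans (colouring_singleton hi))).symm
    · rw [colouring_singleton hi, colouring_singleton hj] at hcol
      exact absurd (hcol ▸ rfl) hne

end colouring

end Stellohedron

theorem stellChromatic_upper_bound_general (n : ℕ) :
    (∃ f : Finset ℕ → ℕ, IsProperColouringStell n (2 * n - 1 - (n - 1) / 2) f) ∧
      stellChromatic n ≤ 2 * n - 1 - (n - 1) / 2 := by
  have hproper := Stellohedron.isProperColouringStell_colouring n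
  rw [show 2 * n - 1 - (n - 1) / 2 = n + n / 2 by omega]
  exact ⟨⟨_, hproper⟩, Nat.sInf_le ⟨_, hproper⟩⟩

/-- There exists a proper colouring of the facets of the `n`-dimensional stellohedron
with `2n − 1 − ⌊(n−1)/2⌋` colours; consequently `σ_n ≤ 2n − 1 − ⌊(n−1)/2⌋`. -/
theorem stellChromatic_upper_bound (n : ℕ) (hn : 1 ≤ n) :
    (∃ f : Finset ℕ → ℕ, IsProperColouringStell n (2 * n - 1 - (n - 1) / 2) f) ∧
      stellChromatic n ≤ 2 * n - 1 - (n - 1) / 2 :=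
  stellChromatic_upper_bound_general n
end
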